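/- Let A = D(α,β) with β ≠ 0, graded by a group G compatibly with the ℕ-grading, and let x₁, x₂ be two linearly independent G-homogeneous elements of the degree-1 component A₁. Suppose two nontrivial relations hold in A: f₁ := Σ_{i,j,l=1}^{2} c_{i,j,l} x_i x_j x_l = 0 and f₂ := Σ_{i,j,l=1}^{2} e_{i,j,l} x_i x_j x_l = 0 (with not all c_{i,j,l} zero and not all e_{i,j,l} zero), and suppose there exists a triple (i,j,l) with c_{i,j,l} ≠ 0 and e_{i,j,l} = 0. Then all monomials x_i x_j x_l for which e_{i,j,l} ≠ 0 have the same G-degree, i.e. deg_G(x_i)·deg_G(x_j)·deg_G(x_l) is the same element of G for all such triples. -/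

import Mathlib

open FreeAlgebra

noncomputable section

/-- The defining relations of the down-up algebra `D(a,b)` (with `u = ι k 0`, `d = ι k 1`). -/
inductive DownUpRel (k : Type*) [CommRing k] (a b : k) :
    FreeAlgebra k (Fin 2) → FreeAlgebra k (Fin 2) → Prop
  | rel1 : DownUpRel k a b (ι k 0 * ι k 0 * ι k 1)
      (a • (ι k 0 * ι k 1 * ι k 0) + b • (ι k 1 * ι k 0 * ι k 0))
  | rel2 : DownUpRel k a b (ι k 0 * ι k 1 * ι k 1)
      (a • (ι k 1 * ι k 0 * ι k 1) + b • (ι k 1 * ι k 1 * ι k 0))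

/-- The down-up algebra `D(a,b)`. -/
abbrev DownUp (k : Type*) [CommRing k] (a b : k) : Type _ :=
  RingQuot (DownUpRel k a b)

/-- The generator `u` of the down-up algebra. -/
def DownUp.u (k : Type*) [CommRing k] (a b : k) : DownUp k a b :=
  RingQuot.mkAlgHom k (DownUpRel k a b) (ι k 0)

/-- The generator `d` of the down-up algebra. -/
def DownUp.d (k : Type*) [CommRing k] (a b : k) : DownUp k a b :=
  RingQuot.mkAlgHom k (DownUpRel k a b) (ι k 1)

/-- The image in `D(a,b)` of a word in the free monoid on the generators `u, d`. -/
def DownUp.wordVal (k : Type*) [CommRing k] (a b : k) :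
    FreeMonoid (Fin 2) →* DownUp k a b :=
  FreeMonoid.lift fun i => RingQuot.mkAlgHom k (DownUpRel k a b) (ι k i)

/-- The degree-`n` component of the down-up algebra: the `k`-span of the images of
all words of length `n` in `u` and `d`. -/
def DownUp.degComp (k : Type*) [CommRing k] (a b : k) (n : ℕ) :
    Submodule k (DownUp k a b) :=
  Submodule.span k {z | ∃ w : FreeMonoid (Fin 2), w.length = n ∧ DownUp.wordVal k a b w = z}

/-! The cubic monomials in `x₀, x₁` span the degree-3 component of `D(α,β)`, which contains the
six independent words `uuu, udu, duu, dud, ddu, ddd` (independence is seen from their action on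
the empty word in a representation truncated at length 3). Hence the relations among the eight
monomials form a space of dimension at most 2. This space is `G`-graded, so if `e` had nonzero
coefficients in two different `G`-degrees, its two homogeneous components together with `c`
would be three independent relations. -/

section GradedRelations

variable {k M G ι : Type*}

lemma DirectSum.IsInternal.linearCombination_indicator_eq_zero [Fintype ι] [DecidableEq G]
    [Semiring k] [AddCommMonoid M] [Module k M] {𝒜 : G → Submodule k M}
    (h𝒜 : DirectSum.IsInternal 𝒜) {m : ι → M} {deg : ι → G} (hm : ∀ t, m t ∈ 𝒜 (deg t)) {e : ι → k}
    (he : Fintype.linearCombination k m e = 0) (γ : G) :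
    Fintype.linearCombination k m ((deg ⁻¹' {γ}).indicator e) = 0 := by
  let := h𝒜.chooseDecomposition
  let π : M →ₗ[k] M := (𝒜 γ).subtype ∘ₗ DirectSum.component k G (fun i => 𝒜 i) γ ∘ₗ
    (DirectSum.decomposeLinearEquiv 𝒜).toLinearMap
  have hπ (t : ι) : π (m t) = if deg t = γ then m t else 0 := by
    split_ifs with h
    · subst h
      exact DirectSum.decompose_of_mem_same 𝒜 (hm t)
    · exact DirectSum.decompose_of_mem_ne 𝒜 (hm t) h
  have hγ := congrArg π he
  simp only [Fintype.linearCombination_apply, map_sum, map_smul, hπ, map_zero] at hγ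
  rw [Fintype.linearCombination_apply, ← hγ]
  refine Finset.sum_congr rfl fun t _ => ?_
  by_cases h : deg t = γ <;> simp [h]

lemma linearIndependent_three_of_pivots [Field k] {v₀ v₁ v₂ : ι → k} {t₀ t₁ t₂ : ι}
    (h₀ : v₀ t₀ ≠ 0) (h₁₀ : v₁ t₀ = 0) (h₂₀ : v₂ t₀ = 0)
    (h₁ : v₁ t₁ ≠ 0) (h₂₁ : v₂ t₁ = 0) (h₂ : v₂ t₂ ≠ 0) (h₁₂ : v₁ t₂ = 0) :
    LinearIndependent k ![v₀, v₁, v₂] := by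
  rw [show ![v₀, v₁, v₂] = Fin.cons v₀ ![v₁, v₂] from rfl, linearIndependent_finCons,
    LinearIndependent.pair_iff]
  refine ⟨fun s t hst => ⟨?_, ?_⟩, fun hv₀ => h₀ ?_⟩
  · simpa [h₂₁, h₁] using congrFun hst t₁
  · simpa [h₁₂, h₂] using congrFun hst t₂
  · have hspan : Submodule.span k (Set.range ![v₁, v₂]) ≤ LinearMap.ker (LinearMap.proj t₀) :=
      Submodule.span_le.2 (Set.range_subset_iff.2 (Fin.forall_fin_two.2 ⟨h₁₀, h₂₀⟩))
    exact hspan hv₀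

theorem DirectSum.IsInternal.deg_eq_of_finrank_ker_le_two [Fintype ι] [DecidableEq G] [Field k]
    [AddCommGroup M] [Module k M] {𝒜 : G → Submodule k M} (h𝒜 : DirectSum.IsInternal 𝒜)
    {m : ι → M} {deg : ι → G} (hm : ∀ t, m t ∈ 𝒜 (deg t))
    (hker : Module.finrank k (LinearMap.ker (Fintype.linearCombination k m)) ≤ 2)
    {c e : ι → k} (hc : Fintype.linearCombination k m c = 0)
    (he : Fintype.linearCombination k m e = 0) {t₀ t₁ t₂ : ι}
    (hct₀ : c t₀ ≠ 0) (het₀ : e t₀ = 0) (het₁ : e t₁ ≠ 0) (het₂ : e t₂ ≠ 0) :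
    deg t₁ = deg t₂ := by
  by_contra hne
  set e₁ := (deg ⁻¹' {deg t₁}).indicator e
  set e₂ := (deg ⁻¹' {deg t₂}).indicator e
  have hind : LinearIndependent k ![c, e₁, e₂] :=
    linearIndependent_three_of_pivots (t₁ := t₁) (t₂ := t₂) hct₀ (by simp [e₁, het₀])
      (by simp [e₂, het₀]) (by simpa [e₁]) (by simp [e₂, hne]) (by simpa [e₂])
      (by simp [e₁, Ne.symm hne])
  have hspan : Submodule.span k (Set.range ![c, e₁, e₂]) ≤
      LinearMap.ker (Fintype.linearCombination k m) := by
    refine Submodule.span_le.2 (Set.range_subset_iff.2 fun i => ?_)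
    fin_cases i
    exacts [hc, h𝒜.linearCombination_indicator_eq_zero hm he _,
      h𝒜.linearCombination_indicator_eq_zero hm he _]
  have h3 := Submodule.finrank_mono hspan
  rw [finrank_span_eq_card hind, Fintype.card_fin] at h3
  omega

end GradedRelations

namespace DownUp

open Finsupp

section TruncatedRepresentation

variable {k : Type*} [CommRing k] (α β : k)

def rewriteCubic (w : List (Fin 2)) : List (Fin 2) →₀ k :=
  if w = [0, 0, 1] then α • single [0, 1, 0] 1 + β • single [1, 0, 0] 1
  else if w = [0, 1, 1] then α • single [1, 0, 1] 1 + β • single [1, 1, 0] 1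
  else single w 1

lemma rewriteCubic_mem_supported (w : List (Fin 2)) :
    rewriteCubic α β w ∈ supported k k {v | v.length = w.length} := by
  unfold rewriteCubic
  split_ifs with h₁ h₂
  · subst h₁
    exact add_mem (Submodule.smul_mem _ _ (single_mem_supported k _ rfl))
      (Submodule.smul_mem _ _ (single_mem_supported k _ rfl))
  · subst h₂
    exact add_mem (Submodule.smul_mem _ _ (single_mem_supported k _ rfl))
      (Submodule.smul_mem _ _ (single_mem_supported k _ rfl))
  · exact single_mem_supported k _ rfl

/-- `u` and `d` act on words of length at most 3 by prepending `0` and `1`; longer words are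
sent to `0`, and `001`, `011` are rewritten by the defining relations of `D(α,β)`. -/
def truncAction (a : Fin 2) : Module.End k (List (Fin 2) →₀ k) :=
  linearCombination k fun w => if w.length ≤ 2 then rewriteCubic α β (a :: w) else 0

lemma truncAction_single (a : Fin 2) (w : List (Fin 2)) (c : k) :
    truncAction α β a (single w c) =
      c • if w.length ≤ 2 then rewriteCubic α β (a :: w) else 0 :=
  linearCombination_single _ _ _

def longWords (n : ℕ) : Submodule k (List (Fin 2) →₀ k) :=
  supported k k {w | n ≤ w.length}

lemma map_truncAction_longWords_le (a : Fin 2) (n : ℕ) :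
    (longWords n).map (truncAction α β a) ≤ longWords (n + 1) := by
  rw [longWords, supported_eq_span_single, Submodule.map_span_le]
  rintro _ ⟨w, hw, rfl⟩
  rw [truncAction_single, one_smul]
  split_ifs
  · refine supported_mono (fun v hv => ?_) (rewriteCubic_mem_supported α β (a :: w))
    simp_all
  · exact zero_mem _

lemma map_truncAction_longWords_three_eq_bot (a : Fin 2) :
    (longWords 3).map (truncAction α β a) = ⊥ := by
  rw [eq_bot_iff, longWords, supported_eq_span_single, Submodule.map_span_le]
  rintro _ ⟨w, hw, rfl⟩
  rw [truncAction_single, if_neg (by simp at hw; omega), smul_zero]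
  exact zero_mem _

lemma truncAction_truncAction_truncAction_eq_zero (a b c : Fin 2) {v : List (Fin 2) →₀ k}
    (hv : v ∈ longWords 1) : truncAction α β a (truncAction α β b (truncAction α β c v)) = 0 := by
  have h₂ := map_truncAction_longWords_le α β c 1 ⟨v, hv, rfl⟩
  have h₃ := map_truncAction_longWords_le α β b 2 ⟨_, h₂, rfl⟩
  simpa [← Submodule.mem_bot k, ← map_truncAction_longWords_three_eq_bot α β a] using
    Submodule.mem_map_of_mem (f := truncAction α β a) h₃

lemma truncAction_respects_rel ⦃p q : FreeAlgebra k (Fin 2)⦄ (h : DownUpRel k α β p q) :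
    FreeAlgebra.lift k (truncAction α β) p = FreeAlgebra.lift k (truncAction α β) q := by
  refine lhom_ext fun w c => ?_
  rcases w with _ | ⟨a, w⟩
  · cases h <;> simp [truncAction_single, rewriteCubic, mul_comm]
  · have hw : single (a :: w) c ∈ longWords 1 := single_mem_supported k c (by simp)
    cases h <;> simp [truncAction_truncAction_truncAction_eq_zero α β _ _ _ hw]

def truncRep : DownUp k α β →ₐ[k] Module.End k (List (Fin 2) →₀ k) :=
  RingQuot.liftAlgHom k ⟨FreeAlgebra.lift k (truncAction α β), truncAction_respects_rel α β⟩

lemma truncRep_wordVal_of (a : Fin 2) :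
    truncRep α β (wordVal k α β (FreeMonoid.of a)) = truncAction α β a := by
  simp [truncRep, wordVal, RingQuot.liftAlgHom_mkAlgHom_apply]

def normalCubicWords : Fin 6 → List (Fin 2) :=
  ![[0, 0, 0], [0, 1, 0], [1, 0, 0], [1, 0, 1], [1, 1, 0], [1, 1, 1]]

lemma truncRep_normalCubicWords_nil (i : Fin 6) :
    truncRep α β (wordVal k α β (.ofList (normalCubicWords i))) (single [] 1) =
      single (normalCubicWords i) 1 := by
  fin_cases i <;>
    simp [normalCubicWords, truncRep_wordVal_of, truncAction_single, rewriteCubic]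

lemma linearIndependent_wordVal_normalCubicWords [Nontrivial k] :
    LinearIndependent k fun i => wordVal k α β (.ofList (normalCubicWords i)) := by
  have hinj : Function.Injective (normalCubicWords : Fin 6 → List (Fin 2)) := by decide
  refine LinearIndependent.of_comp
    ((LinearMap.applyₗ (single [] 1)).comp (truncRep α β).toLinearMap) ?_
  convert (linearIndependent_single_one k (List (Fin 2))).comp _ hinj using 1
  funext i
  exact truncRep_normalCubicWords_nil α β i

end TruncatedRepresentation

section DegreeThree

open Submodule

variable {k : Type*} [Field k] {α β : k}

lemma degComp_one_eq_span :
    degComp k α β 1 = span k (Set.range fun a => wordVal k α β (.of a)) := by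
  refine le_antisymm (span_le.2 ?_) (span_le.2 ?_)
  · rintro _ ⟨w, hw, rfl⟩
    obtain ⟨a, rfl⟩ := FreeMonoid.length_eq_one.1 hw
    exact subset_span ⟨a, rfl⟩
  · rintro _ ⟨a, rfl⟩
    exact subset_span ⟨.of a, rfl, rfl⟩

lemma span_range_eq_degComp_one {x : Fin 2 → DownUp k α β}
    (hx : ∀ i, x i ∈ degComp k α β 1) (hind : LinearIndependent k x) :
    span k (Set.range x) = degComp k α β 1 := by
  rw [degComp_one_eq_span] at hx ⊢
  have := FiniteDimensional.span_of_finite k (Set.finite_range fun a => wordVal k α β (.of a))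
  refine eq_of_le_of_finrank_le (span_le.2 (Set.range_subset_iff.2 hx)) ?_
  rw [finrank_span_eq_card hind]
  exact finrank_range_le_card _

lemma wordVal_mem_span_cubicMonomials {x : Fin 2 → DownUp k α β}
    (hx : ∀ i, x i ∈ degComp k α β 1) (hind : LinearIndependent k x) (a b c : Fin 2) :
    wordVal k α β (.ofList [a, b, c]) ∈
      span k (Set.range fun t : Fin 2 × Fin 2 × Fin 2 => x t.1 * x t.2.1 * x t.2.2) := by
  have hgen (a : Fin 2) : wordVal k α β (.of a) ∈ span k (Set.range x) := by
    rw [span_range_eq_degComp_one hx hind]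
    exact subset_span ⟨.of a, rfl, rfl⟩
  have habc := mul_mem_mul (mul_mem_mul (hgen a) (hgen b)) (hgen c)
  rw [span_mul_span, span_mul_span, ← map_mul, ← map_mul] at habc
  refine span_mono ?_ habc
  rintro _ ⟨_, ⟨_, ⟨i, rfl⟩, _, ⟨j, rfl⟩, rfl⟩, _, ⟨l, rfl⟩, rfl⟩
  exact ⟨(i, j, l), rfl⟩

lemma finrank_ker_cubicMonomials_le_two {x : Fin 2 → DownUp k α β}
    (hx : ∀ i, x i ∈ degComp k α β 1) (hind : LinearIndependent k x) :
    Module.finrank k (LinearMap.ker (Fintype.linearCombination k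
      fun t : Fin 2 × Fin 2 × Fin 2 => x t.1 * x t.2.1 * x t.2.2)) ≤ 2 := by
  set Φ := Fintype.linearCombination k fun t : Fin 2 × Fin 2 × Fin 2 => x t.1 * x t.2.1 * x t.2.2
  set words := fun i => wordVal k α β (.ofList (normalCubicWords i))
  have hwords : Set.range words ⊆ LinearMap.range Φ := by
    rintro _ ⟨i, rfl⟩
    obtain ⟨a, b, c, habc⟩ := List.length_eq_three.1 (by fin_cases i <;> rfl :
      (normalCubicWords i).length = 3)
    rw [SetLike.mem_coe, Fintype.range_linearCombination]
    simpa only [words, habc] using wordVal_mem_span_cubicMonomials hx hind a b c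
  have h6 : 6 ≤ Module.finrank k (LinearMap.range Φ) :=
    calc 6 = Module.finrank k (span k (Set.range words)) := by
          rw [finrank_span_eq_card (linearIndependent_wordVal_normalCubicWords α β),
            Fintype.card_fin]
      _ ≤ _ := finrank_mono (span_le.2 hwords)
  have := Φ.finrank_range_add_finrank_ker
  simp only [Module.finrank_fintype_fun_eq_card, Fintype.card_prod, Fintype.card_fin] at this
  omega

end DegreeThree

end DownUp

open DownUp in
theorem downUp_cubic_relations_homogeneous
    (k : Type*) [Field k]
    (α β : k)
    (G : Type*) [Group G] [DecidableEq G]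
    (𝒜 : G → Submodule k (DownUp k α β))
    -- `𝒜` is a `G`-grading of `A`:
    (hmul : ∀ g h : G, ∀ a ∈ 𝒜 g, ∀ b ∈ 𝒜 h, a * b ∈ 𝒜 (g * h))
    (hdirect : DirectSum.IsInternal 𝒜)
    -- `x 0, x 1` are linearly independent `G`-homogeneous elements of `A₁`:
    (x : Fin 2 → DownUp k α β) (g : Fin 2 → G)
    (hx1 : ∀ i, x i ∈ DownUp.degComp k α β 1)
    (hxg : ∀ i, x i ∈ 𝒜 (g i))
    (hind : LinearIndependent k x)
    -- the two nontrivial relations: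
    (c e : Fin 2 → Fin 2 → Fin 2 → k)
    (hf1 : ∑ i : Fin 2, ∑ j : Fin 2, ∑ l : Fin 2, c i j l • (x i * x j * x l) = 0)
    (hf2 : ∑ i : Fin 2, ∑ j : Fin 2, ∑ l : Fin 2, e i j l • (x i * x j * x l) = 0)
    (hce : ∃ i j l, c i j l ≠ 0 ∧ e i j l = 0) :
    ∀ i j l i' j' l' : Fin 2, e i j l ≠ 0 → e i' j' l' ≠ 0 →
      g i * g j * g l = g i' * g j' * g l' := by
  intro i j l i' j' l' he he'
  obtain ⟨i₀, j₀, l₀, hc₀, he₀⟩ := hce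
  have hsum (a : Fin 2 → Fin 2 → Fin 2 → k) :
      Fintype.linearCombination k (fun t : Fin 2 × Fin 2 × Fin 2 => x t.1 * x t.2.1 * x t.2.2)
        (fun t => a t.1 t.2.1 t.2.2) = ∑ i, ∑ j, ∑ l, a i j l • (x i * x j * x l) := by
    simp only [Fintype.linearCombination_apply, Fintype.sum_prod_type]
  have hm (t : Fin 2 × Fin 2 × Fin 2) : x t.1 * x t.2.1 * x t.2.2 ∈ 𝒜 (g t.1 * g t.2.1 * g t.2.2) :=
    hmul _ _ _ (hmul _ _ _ (hxg _) _ (hxg _)) _ (hxg _)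
  exact hdirect.deg_eq_of_finrank_ker_le_two hm (finrank_ker_cubicMonomials_le_two hx1 hind)
    ((hsum c).trans hf1) ((hsum e).trans hf2) (t₀ := (i₀, j₀, l₀)) hc₀ he₀
    (t₁ := (i, j, l)) (t₂ := (i', j', l')) he he'

end
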